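/- arXiv:1707.00295 — 2 statements merged into one kernel-verified Lean document; each statement's English description precedes it below -/
import Mathlib

section
/- Let v₁, …, vₙ be distinct points in ℝᵈ and let V be the matrix with entries ‖vᵢ − vⱼ‖². Then the matrix W := V − J has at most one positive eigenvalue. -/
/-!
On vectors `x` with `∑ xᵢ = 0` the quadratic form of the all-ones matrix vanishes, and that of
the squared distance matrix is `-2 ‖∑ xᵢ vᵢ‖² ≤ 0`; so `W` is negative semidefinite on a
hyperplane. Two orthonormal eigenvectors with positive eigenvalues would span a plane meeting
that hyperplane in a nonzero vector, on which the quadratic form of `W` is positive.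
-/

open Finset Matrix

variable {ι : Type*} [Fintype ι]

lemma dotProduct_mulVec_of_one (x : ι → ℝ) :
    x ⬝ᵥ of (fun _ _ => (1 : ℝ)) *ᵥ x = (∑ i, x i) ^ 2 := by
  simp only [dotProduct, mulVec, of_apply, one_mul, ← sum_mul, sq]

lemma dotProduct_mulVec_sq_dist_of_sum_eq_zero {E : Type*} [NormedAddCommGroup E]
    [InnerProductSpace ℝ E] (v : ι → E) {x : ι → ℝ} (hx : ∑ i, x i = 0) :
    x ⬝ᵥ of (fun i j => ‖v i - v j‖ ^ 2) *ᵥ x = -2 * ‖∑ i, x i • v i‖ ^ 2 := by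
  have hcross : ‖∑ i, x i • v i‖ ^ 2 = ∑ i, ∑ j, x i * x j * inner ℝ (v i) (v j) := by
    simp only [← real_inner_self_eq_norm_sq, sum_inner, inner_sum, real_inner_smul_left,
      real_inner_smul_right]
    exact sum_congr rfl fun i _ => sum_congr rfl fun j _ => by rw [real_inner_comm]; ring
  calc x ⬝ᵥ of (fun i j => ‖v i - v j‖ ^ 2) *ᵥ x
      = ∑ i, ∑ j, ((x i * ‖v i‖ ^ 2) * x j + x i * (x j * ‖v j‖ ^ 2)
          - 2 * (x i * x j * inner ℝ (v i) (v j))) := by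
        simp only [dotProduct, mulVec, of_apply, mul_sum]
        exact sum_congr rfl fun i _ => sum_congr rfl fun j _ => by rw [norm_sub_sq_real]; ring
    _ = -2 * ‖∑ i, x i • v i‖ ^ 2 := by
        simp only [sum_sub_distrib, sum_add_distrib, ← sum_mul, ← mul_sum, hx, hcross]
        ring

namespace Matrix.IsHermitian

variable [DecidableEq ι] {A : Matrix ι ι ℝ} (hA : A.IsHermitian)

lemma eigenvectorBasis_dotProduct (i j : ι) :
    ⇑(hA.eigenvectorBasis i) ⬝ᵥ ⇑(hA.eigenvectorBasis j) = if i = j then 1 else 0 := by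
  rw [dotProduct_comm, ← orthonormal_iff_ite.mp hA.eigenvectorBasis.orthonormal i j,
    EuclideanSpace.inner_eq_star_dotProduct, star_trivial]

lemma dotProduct_mulVec_eigenvectorBasis_combination {i j : ι} (hij : i ≠ j) (a b : ℝ) :
    let x := a • ⇑(hA.eigenvectorBasis i) + b • ⇑(hA.eigenvectorBasis j)
    x ⬝ᵥ A *ᵥ x = a ^ 2 * hA.eigenvalues i + b ^ 2 * hA.eigenvalues j := by
  simp only [mulVec_add, mulVec_smul, mulVec_eigenvectorBasis, add_dotProduct, dotProduct_add,
    smul_dotProduct, dotProduct_smul, eigenvectorBasis_dotProduct, hij, hij.symm, if_true,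
    if_false, smul_eq_mul]
  ring

theorem card_filter_eigenvalues_pos_le_one_of_dotProduct_mulVec_nonpos (c : ι → ℝ)
    (hc : ∀ x, x ⬝ᵥ c = 0 → x ⬝ᵥ A *ᵥ x ≤ 0) :
    #{i | 0 < hA.eigenvalues i} ≤ 1 := by
  by_contra! h
  obtain ⟨i, hi, j, hj, hij⟩ := one_lt_card.mp h
  rw [mem_filter] at hi hj
  set u := ⇑(hA.eigenvectorBasis i)
  set w := ⇑(hA.eigenvectorBasis j)
  obtain ⟨a, b, hab, hx⟩ : ∃ a b : ℝ, (a ≠ 0 ∨ b ≠ 0) ∧ (a • u + b • w) ⬝ᵥ c = 0 := by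
    simp only [add_dotProduct, smul_dotProduct, smul_eq_mul]
    by_cases hu : u ⬝ᵥ c = 0
    · exact ⟨1, 0, by simp, by simp [hu]⟩
    · exact ⟨w ⬝ᵥ c, -(u ⬝ᵥ c), Or.inr (neg_ne_zero.mpr hu), by ring⟩
  have hpos : 0 < a ^ 2 * hA.eigenvalues i + b ^ 2 * hA.eigenvalues j := by
    rcases hab with ha | hb
    · linarith [mul_pos (sq_pos_of_ne_zero ha) hi.2, mul_nonneg (sq_nonneg b) hj.2.le]
    · linarith [mul_pos (sq_pos_of_ne_zero hb) hj.2, mul_nonneg (sq_nonneg a) hi.2.le]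
  have hnonpos := hc _ hx
  rw [hA.dotProduct_mulVec_eigenvectorBasis_combination hij] at hnonpos
  linarith

end Matrix.IsHermitian

theorem stmt2_general (d n : ℕ) (v : Fin n → EuclideanSpace ℝ (Fin d))
    (V : Matrix (Fin n) (Fin n) ℝ) (hVdef : ∀ i j, V i j = ‖v i - v j‖ ^ 2)
    (W : Matrix (Fin n) (Fin n) ℝ)
    (hWdef : W = V - Matrix.of (fun _ _ => (1 : ℝ)))
    (hW : W.IsHermitian) :
    (Finset.univ.filter fun i => 0 < hW.eigenvalues i).card ≤ 1 := by
  refine hW.card_filter_eigenvalues_pos_le_one_of_dotProduct_mulVec_nonpos 1 fun x hx => ?_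
  rw [dotProduct_one] at hx
  have hV : V = of fun i j => ‖v i - v j‖ ^ 2 := ext hVdef
  rw [hWdef, hV, sub_mulVec, dotProduct_sub, dotProduct_mulVec_sq_dist_of_sum_eq_zero v hx,
    dotProduct_mulVec_of_one, hx]
  linarith [sq_nonneg ‖∑ i, x i • v i‖]

theorem stmt2 (d n : ℕ) (v : Fin n → EuclideanSpace ℝ (Fin d))
    (hv : Function.Injective v)
    (V : Matrix (Fin n) (Fin n) ℝ) (hVdef : ∀ i j, V i j = ‖v i - v j‖ ^ 2)
    (W : Matrix (Fin n) (Fin n) ℝ)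
    (hWdef : W = V - Matrix.of (fun _ _ => (1 : ℝ)))
    (hW : W.IsHermitian) :
    (Finset.univ.filter fun i => 0 < hW.eigenvalues i).card ≤ 1 :=
  stmt2_general d n v V hVdef W hWdef hW
end

section
/- Let v₁, …, vₙ be distinct points in ℝᵈ with squared distance matrix V, and let U := V − J + I. Then U has at most one eigenvalue greater than 1, and at least n − d − 2 eigenvalues equal to 1 (counted with multiplicity). -/
/-!
On vectors `x` with `∑ i, x i = 0` the rank-one parts of `V` vanish and
`xᵀ V x = -2 ‖∑ i, x i • v i‖²`, so `xᵀ U x ≤ xᵀ x` on a hyperplane. Two orthonormal eigenvectors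
with eigenvalues `> 1` would span a plane meeting that hyperplane, where the form is `> xᵀ x`.
On the other hand `U - 1 = V - J` is the sum of two rank-one matrices and `-2` times the Gram
matrix of the `vᵢ`, which has rank at most `d`; so the eigenvalue `1` has multiplicity at least
`n - (d + 2)`.
-/

open Matrix Finset

lemma Matrix.rank_add_le {m n K : Type*} [Fintype n] [Field K] (A B : Matrix m n K) :
    (A + B).rank ≤ A.rank + B.rank := by
  rw [rank, rank, rank, mulVecLin_add]
  refine (Submodule.finrank_mono ?_).trans (Submodule.finrank_add_le_finrank_add_finrank _ _)
  rintro _ ⟨x, rfl⟩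
  exact Submodule.add_mem_sup ⟨x, rfl⟩ ⟨x, rfl⟩

lemma dotProduct_vecMulVec_mulVec {n α : Type*} [Fintype n] [CommSemiring α] (x a b : n → α) :
    x ⬝ᵥ vecMulVec a b *ᵥ x = (x ⬝ᵥ a) * (b ⬝ᵥ x) := by
  simp [vecMulVec_mulVec, mul_comm]

section SqDist

variable {ι E : Type*} [NormedAddCommGroup E] [InnerProductSpace ℝ E]

def sqDistMatrix (v : ι → E) : Matrix ι ι ℝ := of fun i j => ‖v i - v j‖ ^ 2

lemma sqDistMatrix_eq (v : ι → E) :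
    sqDistMatrix v = vecMulVec (fun i => ‖v i‖ ^ 2) 1 + vecMulVec 1 (fun j => ‖v j‖ ^ 2)
      - (2 : ℝ) • gram ℝ v := by
  ext i j
  simp [sqDistMatrix, gram_apply, norm_sub_sq_real]
  ring

variable [Fintype ι]

lemma dotProduct_sqDistMatrix_mulVec_of_sum_eq_zero (v : ι → E) {x : ι → ℝ}
    (hx : ∑ i, x i = 0) :
    x ⬝ᵥ sqDistMatrix v *ᵥ x = -2 * ‖∑ i, x i • v i‖ ^ 2 := by
  have hgram : x ⬝ᵥ gram ℝ v *ᵥ x = ‖∑ i, x i • v i‖ ^ 2 := by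
    rw [← real_inner_self_eq_norm_sq, ← star_dotProduct_gram_mulVec, star_trivial]
  rw [← one_dotProduct] at hx
  rw [sqDistMatrix_eq, sub_mulVec, add_mulVec, smul_mulVec, dotProduct_sub, dotProduct_add,
    dotProduct_smul, dotProduct_vecMulVec_mulVec, dotProduct_vecMulVec_mulVec, hx,
    dotProduct_comm x 1, hx, hgram, smul_eq_mul]
  ring

lemma rank_gram_le_finrank [FiniteDimensional ℝ E] (v : ι → E) :
    (gram ℝ v).rank ≤ Module.finrank ℝ E := by
  rw [gram_eq_conjTranspose_mul (stdOrthonormalBasis ℝ E)]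
  exact (rank_mul_le_right _ _).trans ((rank_le_card_height _).trans (by simp))

lemma rank_sqDistMatrix_sub_ones_le [FiniteDimensional ℝ E] (v : ι → E) :
    (sqDistMatrix v - of fun _ _ => 1).rank ≤ Module.finrank ℝ E + 2 := by
  have hdecomp : sqDistMatrix v - of (fun _ _ => 1) = vecMulVec (fun i => ‖v i‖ ^ 2) 1
      + vecMulVec 1 (fun j => ‖v j‖ ^ 2 - 1) + (-2 : ℝ) • gram ℝ v := by
    rw [sqDistMatrix_eq]
    ext i j
    simp
    ring
  have hgram : ((-2 : ℝ) • gram ℝ v).rank ≤ Module.finrank ℝ E := by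
    rw [rank_smul_of_mem_nonZeroDivisors _ (mem_nonZeroDivisors_of_ne_zero (by norm_num))]
    exact rank_gram_le_finrank v
  rw [hdecomp]
  refine (rank_add_le _ _).trans ?_
  have := (rank_add_le _ _).trans <| add_le_add
    (rank_vecMulVec_le (fun i => ‖v i‖ ^ 2) 1) (rank_vecMulVec_le 1 fun j => ‖v j‖ ^ 2 - 1)
  omega

end SqDist

namespace Matrix.IsHermitian

variable {n : Type*} [Fintype n] [DecidableEq n]

open Unitary in
lemma rank_sub_smul_one {𝕜 : Type*} [RCLike 𝕜] {A : Matrix n n 𝕜} (hA : A.IsHermitian) (μ : ℝ) :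
    (A - (μ : 𝕜) • 1).rank = Fintype.card {i // hA.eigenvalues i ≠ μ} := by
  have hconj : A - (μ : 𝕜) • 1 = conjStarAlgAut 𝕜 _ hA.eigenvectorUnitary
      (diagonal fun i => ((hA.eigenvalues i - μ : ℝ) : 𝕜)) := by
    conv_lhs => rw [hA.spectral_theorem]
    rw [← map_one (conjStarAlgAut 𝕜 _ hA.eigenvectorUnitary), ← map_smul, ← map_sub]
    congr 1
    ext i j
    by_cases h : i = j <;> simp [h, Algebra.algebraMap_eq_smul_one, sub_smul]
  rw [hconj, conjStarAlgAut_apply, ← coe_star]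
  simp [-isUnit_iff_ne_zero, -coe_star, rank_diagonal, sub_eq_zero]

variable {A : Matrix n n ℝ}

lemma dotProduct_eigenvectorBasis (hA : A.IsHermitian) (i j : n) :
    ⇑(hA.eigenvectorBasis i) ⬝ᵥ ⇑(hA.eigenvectorBasis j) = if i = j then 1 else 0 := by
  rw [← orthonormal_iff_ite.mp hA.eigenvectorBasis.orthonormal i j, dotProduct_comm]
  rfl

lemma card_lt_eigenvalues_le_one (hA : A.IsHermitian) (a : n → ℝ) (c : ℝ)
    (h : ∀ x, a ⬝ᵥ x = 0 → x ⬝ᵥ A *ᵥ x ≤ c * (x ⬝ᵥ x)) :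
    #{i | c < hA.eigenvalues i} ≤ 1 := by
  rw [Finset.card_le_one]
  intro i hi j hj
  by_contra hij
  simp only [Finset.mem_filter, Finset.mem_univ, true_and] at hi hj
  set u : n → ℝ := ⇑(hA.eigenvectorBasis i)
  set w : n → ℝ := ⇑(hA.eigenvectorBasis j)
  obtain ⟨α, β, hαβ, hker⟩ :
      ∃ α β : ℝ, 0 < α ^ 2 + β ^ 2 ∧ α * (a ⬝ᵥ u) + β * (a ⬝ᵥ w) = 0 := by
    by_cases hw : a ⬝ᵥ w = 0
    · exact ⟨0, 1, by norm_num, by simp [hw]⟩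
    · exact ⟨a ⬝ᵥ w, -(a ⬝ᵥ u), by positivity, by ring⟩
  have hpair : ∀ γ δ : ℝ, (α • u + β • w) ⬝ᵥ (γ • u + δ • w) = α * γ + β * δ := by
    intro γ δ
    simp only [add_dotProduct, dotProduct_add, smul_dotProduct, dotProduct_smul, u, w,
      dotProduct_eigenvectorBasis, hij, Ne.symm hij, if_true, if_false, smul_eq_mul]
    ring
  have hAx :
      A *ᵥ (α • u + β • w) = (α * hA.eigenvalues i) • u + (β * hA.eigenvalues j) • w := by
    rw [mulVec_add, mulVec_smul, mulVec_smul, hA.mulVec_eigenvectorBasis,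
      hA.mulVec_eigenvectorBasis, smul_smul, smul_smul]
  have hle := h (α • u + β • w) <| by
    rw [dotProduct_add, dotProduct_smul, dotProduct_smul]
    simpa using hker
  rw [hAx, hpair, hpair α β] at hle
  nlinarith [mul_pos hαβ (sub_pos.2 (lt_min hi hj)),
    mul_nonneg (sq_nonneg α) (sub_nonneg.2 (min_le_left (hA.eigenvalues i) (hA.eigenvalues j))),
    mul_nonneg (sq_nonneg β) (sub_nonneg.2 (min_le_right (hA.eigenvalues i) (hA.eigenvalues j)))]

end Matrix.IsHermitian

theorem stmt3_general (d n : ℕ) (v : Fin n → EuclideanSpace ℝ (Fin d))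
    (V : Matrix (Fin n) (Fin n) ℝ) (hVdef : ∀ i j, V i j = ‖v i - v j‖ ^ 2)
    (U : Matrix (Fin n) (Fin n) ℝ)
    (hUdef : U = V - Matrix.of (fun _ _ => (1 : ℝ)) + 1)
    (hU : U.IsHermitian) :
    (Finset.univ.filter fun i => 1 < hU.eigenvalues i).card ≤ 1 ∧
      n - d - 2 ≤ (Finset.univ.filter fun i => hU.eigenvalues i = 1).card := by
  obtain rfl : V = sqDistMatrix v := Matrix.ext hVdef
  have hU_sub_one : U - 1 = sqDistMatrix v - of fun _ _ => 1 := by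
    rw [hUdef, add_sub_cancel_right]
  constructor
  · refine hU.card_lt_eigenvalues_le_one 1 1 fun x hx => ?_
    rw [one_dotProduct] at hx
    have hJ : (of fun _ _ => 1 : Matrix (Fin n) (Fin n) ℝ) *ᵥ x = 0 := by
      ext; simp [mulVec, dotProduct, hx]
    rw [hUdef, add_mulVec, sub_mulVec, one_mulVec, hJ, sub_zero, dotProduct_add,
      dotProduct_sqDistMatrix_mulVec_of_sum_eq_zero v hx]
    nlinarith [sq_nonneg ‖∑ i, x i • v i‖]
  · have hrank := hU.rank_sub_smul_one 1
    rw [RCLike.ofReal_one, one_smul, hU_sub_one, Fintype.card_subtype] at hrank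
    simp only [ne_eq] at hrank
    have hle := rank_sqDistMatrix_sub_ones_le v
    rw [finrank_euclideanSpace_fin] at hle
    have hsplit := Finset.card_filter_add_card_filter_not
      (s := Finset.univ) (fun i => hU.eigenvalues i = 1)
    simp only [Finset.card_univ, Fintype.card_fin] at hsplit
    omega

theorem stmt3 (d n : ℕ) (v : Fin n → EuclideanSpace ℝ (Fin d))
    (hv : Function.Injective v)
    (V : Matrix (Fin n) (Fin n) ℝ) (hVdef : ∀ i j, V i j = ‖v i - v j‖ ^ 2)
    (U : Matrix (Fin n) (Fin n) ℝ)
    (hUdef : U = V - Matrix.of (fun _ _ => (1 : ℝ)) + 1)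
    (hU : U.IsHermitian) :
    (Finset.univ.filter fun i => 1 < hU.eigenvalues i).card ≤ 1 ∧
      n - d - 2 ≤ (Finset.univ.filter fun i => hU.eigenvalues i = 1).card :=
  stmt3_general d n v V hVdef U hUdef hU
end
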